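/- arXiv:1606.03941 — 2 statements merged into one kernel-verified Lean document; each statement's English description precedes it below -/
import Mathlib

section
/- For a bounded operator A on ℓ²(ℤ), if for every δ > 0 there exists a unit vector x with support of diameter less than n such that ‖Ax‖ ≤ ν(A) + δ, then ν(A) ≤ inf_{k∈ℤ} ν(A restricted to ℓ²({k+1,…,k+n})) ≤ ν(A) + δ, where the restriction maps ℓ²({k+1,…,k+n}) → ℓ²(ℤ) by extension by zero followed by A. -/
/-- ℓ²(ℤ). -/
noncomputable abbrev Ell2 := lp (fun _ : ℤ => ℂ) 2

/-- The lower norm ν(A) := inf {‖Ax‖ : ‖x‖ = 1}. -/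
noncomputable def lowerNorm (A : Ell2 →L[ℂ] Ell2) : ℝ :=
  sInf ((fun x => ‖A x‖) '' {x : Ell2 | ‖x‖ = 1})

/-- The lower norm of the restriction of A to ℓ²({k+1,…,k+n}): the infimum of ‖Ax‖
    over unit vectors supported in {k+1,…,k+n}. -/
noncomputable def lowerNormRes (A : Ell2 →L[ℂ] Ell2) (n : ℕ) (k : ℤ) : ℝ :=
  sInf ((fun x => ‖A x‖) ''
    {x : Ell2 | ‖x‖ = 1 ∧ ∀ j : ℤ, (x : ∀ _ : ℤ, ℂ) j ≠ 0 → j ∈ Set.Ioc k (k + n)})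

/-- If for every δ > 0 the lower norm of A is attained up to δ by a unit vector of
    support diameter < n, then for each δ > 0:
    ν(A) ≤ inf_{k∈ℤ} ν(A|_{ℓ²({k+1,…,k+n})}) ≤ ν(A) + δ. -/
theorem lowerNorm_via_finite_sections (A : Ell2 →L[ℂ] Ell2) (n : ℕ)
    (h : ∀ δ : ℝ, 0 < δ → ∃ x : Ell2, ‖x‖ = 1 ∧
      (∀ i j : ℤ, (x : ∀ _ : ℤ, ℂ) i ≠ 0 → (x : ∀ _ : ℤ, ℂ) j ≠ 0 → |i - j| < (n : ℤ)) ∧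
      ‖A x‖ ≤ lowerNorm A + δ) :
    ∀ δ : ℝ, 0 < δ →
      lowerNorm A ≤ sInf (Set.range (lowerNormRes A n)) ∧
      sInf (Set.range (lowerNormRes A n)) ≤ lowerNorm A + δ := by
  -- any unit vector has a nonzero coordinate
  have hnz : ∀ x : Ell2, ‖x‖ = 1 → ∃ i : ℤ, (x : ∀ _ : ℤ, ℂ) i ≠ 0 := by
    intro x hx
    by_contra hc
    push_neg at hc
    have : x = 0 := by
      ext j
      exact hc j
    rw [this] at hx
    simp at hx
  -- n ≥ 1
  have hn : 1 ≤ n := by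
    by_contra hn
    push_neg at hn
    interval_cases n
    obtain ⟨x, hx1, hx2, _⟩ := h 1 one_pos
    obtain ⟨i, hi⟩ := hnz x hx1
    have := hx2 i i hi hi
    simp at this
  have hbdd : BddBelow ((fun x : Ell2 => ‖A x‖) '' {x : Ell2 | ‖x‖ = 1}) := by
    refine ⟨0, ?_⟩
    rintro y ⟨x, -, rfl⟩
    positivity
  have hbddk : ∀ k : ℤ, BddBelow ((fun x : Ell2 => ‖A x‖) ''
      {x : Ell2 | ‖x‖ = 1 ∧ ∀ j : ℤ, (x : ∀ _ : ℤ, ℂ) j ≠ 0 → j ∈ Set.Ioc k (k + n)}) := by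
    intro k
    refine ⟨0, ?_⟩
    rintro y ⟨x, -, rfl⟩
    positivity
  -- each lowerNormRes bounds lowerNorm from below
  have hkey : ∀ k : ℤ, lowerNorm A ≤ lowerNormRes A n k := by
    intro k
    refine csInf_le_csInf hbdd ?_ ?_
    · -- nonempty: the single vector at k+1
      refine ⟨‖A (lp.single 2 (k+1) (1:ℂ))‖, lp.single 2 (k+1) (1:ℂ), ⟨?_, ?_⟩, rfl⟩
      · have := lp.norm_single (p := 2) (E := fun _ : ℤ => ℂ) (by norm_num) (k+1) (1:ℂ)
        simpa using this
      · intro j hj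
        by_contra hjm
        have : j ≠ k + 1 := by
          intro hh
          subst hh
          apply hjm
          constructor
          · omega
          · omega
        have h0 := lp.single_apply_ne (E := fun _ : ℤ => ℂ) 2 (k+1) (1:ℂ) this
        exact hj h0
    · rintro y ⟨x, ⟨hx1, -⟩, rfl⟩
      exact ⟨x, hx1, rfl⟩
  intro δ hδ
  have hrange_bdd : BddBelow (Set.range (lowerNormRes A n)) := by
    refine ⟨0, ?_⟩
    rintro y ⟨k, rfl⟩
    exact Real.sInf_nonneg (by rintro y ⟨x, -, rfl⟩; positivity)
  constructor
  · refine le_csInf ⟨lowerNormRes A n 0, 0, rfl⟩ ?_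
    rintro y ⟨k, rfl⟩
    exact hkey k
  · -- use h with δ/2
    obtain ⟨x, hx1, hx2, hx3⟩ := h (δ/2) (by positivity)
    obtain ⟨i₀, hi₀⟩ := hnz x hx1
    -- least element of support
    obtain ⟨m, hm1, hm2⟩ := Int.exists_least_of_bdd (P := fun j => (x : ∀ _ : ℤ, ℂ) j ≠ 0)
      ⟨i₀ - n, fun z hz => by have := abs_lt.mp (hx2 i₀ z hi₀ hz); omega⟩ ⟨i₀, hi₀⟩
    have hmem : ‖A x‖ ∈ (fun x : Ell2 => ‖A x‖) ''
        {x : Ell2 | ‖x‖ = 1 ∧ ∀ j : ℤ, (x : ∀ _ : ℤ, ℂ) j ≠ 0 → j ∈ Set.Ioc (m-1) ((m-1) + n)} := by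
      refine ⟨x, ⟨hx1, ?_⟩, rfl⟩
      intro j hj
      have h1 := hm2 j hj
      have h2 := abs_lt.mp (hx2 m j hm1 hj)
      constructor <;> omega
    calc sInf (Set.range (lowerNormRes A n)) ≤ lowerNormRes A n (m-1) :=
            csInf_le hrange_bdd ⟨m-1, rfl⟩
      _ ≤ ‖A x‖ := csInf_le (hbddk (m-1)) hmem
      _ ≤ lowerNorm A + δ/2 := hx3
      _ ≤ lowerNorm A + δ := by linarith
end

section
/- (Shift-through lemma) For any Givens rotations G₂, G₁, G₂' acting on rows {2,3}, {1,2}, {2,3} of ℂ³ (i.e., any product of the form G₂G₁G₂'), there exist Givens rotations H₁, H₂, H₁' acting on rows {1,2}, {2,3}, {1,2} such that G₂G₁G₂' = H₁H₂H₁'. Equivalently, every special unitary 3×3 matrix expressible as a product of rotations in positions (2,3),(1,2),(2,3) is expressible as a product of rotations in positions (1,2),(2,3),(1,2). -/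
/-- The Givens rotation G_i(c,s) ∈ ℂ^{m×m}: the identity with the 2×2 block in
    rows/columns i, i+1 replaced by [[c, s], [−s̄, c̄]]. -/
def givens (m : ℕ) (i : ℕ) (h : i + 1 < m) (c s : ℂ) : Matrix (Fin m) (Fin m) ℂ :=
  fun p q =>
    if p = (⟨i, by omega⟩ : Fin m) ∧ q = (⟨i, by omega⟩ : Fin m) then c
    else if p = (⟨i, by omega⟩ : Fin m) ∧ q = (⟨i + 1, h⟩ : Fin m) then s
    else if p = (⟨i + 1, h⟩ : Fin m) ∧ q = (⟨i, by omega⟩ : Fin m) then -(starRingEnd ℂ s)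
    else if p = (⟨i + 1, h⟩ : Fin m) ∧ q = (⟨i + 1, h⟩ : Fin m) then starRingEnd ℂ c
    else if p = q then 1 else 0

open Matrix Complex

lemma g0_eq (c s : ℂ) : givens 3 0 (of_decide_eq_true rfl) c s =
    !![c, s, 0; -(starRingEnd ℂ) s, (starRingEnd ℂ) c, 0; 0, 0, 1] := by
  ext i j
  fin_cases i <;> fin_cases j <;> simp [givens, Matrix.vecHead, Matrix.vecTail]

lemma g1_eq (c s : ℂ) : givens 3 1 (of_decide_eq_true rfl) c s =
    !![1, 0, 0; 0, c, s; 0, -(starRingEnd ℂ) s, (starRingEnd ℂ) c] := by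
  ext i j
  fin_cases i <;> fin_cases j <;> simp [givens, Matrix.vecHead, Matrix.vecTail]

lemma g0_one : givens 3 0 (of_decide_eq_true rfl) 1 0 = 1 := by
  rw [g0_eq]
  ext i j
  fin_cases i <;> fin_cases j <;> simp [Matrix.one_apply, Matrix.vecHead, Matrix.vecTail]

lemma g1_one : givens 3 1 (of_decide_eq_true rfl) 1 0 = 1 := by
  rw [g1_eq]
  ext i j
  fin_cases i <;> fin_cases j <;> simp [Matrix.one_apply, Matrix.vecHead, Matrix.vecTail]

lemma g0_mul (c s c' s' : ℂ) :
    givens 3 0 (of_decide_eq_true rfl) c s * givens 3 0 (of_decide_eq_true rfl) c' s' =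
      givens 3 0 (of_decide_eq_true rfl) (c * c' - s * (starRingEnd ℂ) s') (c * s' + s * (starRingEnd ℂ) c') := by
  rw [g0_eq, g0_eq, g0_eq, Matrix.mul_fin_three]
  congr 1 <;> simp <;> constructor <;> ring

lemma g1_mul (c s c' s' : ℂ) :
    givens 3 1 (of_decide_eq_true rfl) c s * givens 3 1 (of_decide_eq_true rfl) c' s' =
      givens 3 1 (of_decide_eq_true rfl) (c * c' - s * (starRingEnd ℂ) s') (c * s' + s * (starRingEnd ℂ) c') := by
  rw [g1_eq, g1_eq, g1_eq, Matrix.mul_fin_three]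
  congr 1 <;> simp <;> constructor <;> ring

lemma g0_ct (c s : ℂ) :
    (givens 3 0 (of_decide_eq_true rfl) c s)ᴴ = givens 3 0 (of_decide_eq_true rfl) ((starRingEnd ℂ) c) (-s) := by
  rw [g0_eq, g0_eq]
  ext i j
  fin_cases i <;> fin_cases j <;>
    simp [Matrix.conjTranspose_apply, Matrix.vecHead, Matrix.vecTail]

lemma g1_ct (c s : ℂ) :
    (givens 3 1 (of_decide_eq_true rfl) c s)ᴴ = givens 3 1 (of_decide_eq_true rfl) ((starRingEnd ℂ) c) (-s) := by
  rw [g1_eq, g1_eq]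
  ext i j
  fin_cases i <;> fin_cases j <;>
    simp [Matrix.conjTranspose_apply, Matrix.vecHead, Matrix.vecTail]

lemma key {c s : ℂ} (h : ‖c‖ ^ 2 + ‖s‖ ^ 2 = 1) :
    c * (starRingEnd ℂ) c + s * (starRingEnd ℂ) s = 1 := by
  rw [Complex.mul_conj', Complex.mul_conj']
  exact_mod_cast congrArg (Complex.ofReal) h

lemma g0_unit {c s : ℂ} (h : ‖c‖ ^ 2 + ‖s‖ ^ 2 = 1) :
    givens 3 0 (of_decide_eq_true rfl) c s * (givens 3 0 (of_decide_eq_true rfl) c s)ᴴ = 1 := by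
  rw [g0_ct, g0_mul]
  have : c * (starRingEnd ℂ) c - s * (starRingEnd ℂ) (-s) = 1 := by
    rw [map_neg]; rw [mul_neg, sub_neg_eq_add]; exact key h
  rw [this]
  have : c * -s + s * (starRingEnd ℂ) ((starRingEnd ℂ) c) = 0 := by
    simp; ring
  rw [this, g0_one]

lemma g1_unit {c s : ℂ} (h : ‖c‖ ^ 2 + ‖s‖ ^ 2 = 1) :
    givens 3 1 (of_decide_eq_true rfl) c s * (givens 3 1 (of_decide_eq_true rfl) c s)ᴴ = 1 := by
  rw [g1_ct, g1_mul]
  have : c * (starRingEnd ℂ) c - s * (starRingEnd ℂ) (-s) = 1 := by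
    rw [map_neg]; rw [mul_neg, sub_neg_eq_add]; exact key h
  rw [this]
  have : c * -s + s * (starRingEnd ℂ) ((starRingEnd ℂ) c) = 0 := by
    simp; ring
  rw [this, g1_one]

lemma g0_unit' {c s : ℂ} (h : ‖c‖ ^ 2 + ‖s‖ ^ 2 = 1) :
    (givens 3 0 (of_decide_eq_true rfl) c s)ᴴ * givens 3 0 (of_decide_eq_true rfl) c s = 1 :=
  mul_eq_one_comm.mp (g0_unit h)

lemma g1_unit' {c s : ℂ} (h : ‖c‖ ^ 2 + ‖s‖ ^ 2 = 1) :
    (givens 3 1 (of_decide_eq_true rfl) c s)ᴴ * givens 3 1 (of_decide_eq_true rfl) c s = 1 :=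
  mul_eq_one_comm.mp (g1_unit h)

lemma g0_det {c s : ℂ} (h : ‖c‖ ^ 2 + ‖s‖ ^ 2 = 1) :
    (givens 3 0 (of_decide_eq_true rfl) c s).det = 1 := by
  rw [g0_eq, Matrix.det_fin_three]
  simp [Matrix.vecHead, Matrix.vecTail]
  calc c * (starRingEnd ℂ) c + s * (starRingEnd ℂ) s = 1 := key h

lemma g1_det {c s : ℂ} (h : ‖c‖ ^ 2 + ‖s‖ ^ 2 = 1) :
    (givens 3 1 (of_decide_eq_true rfl) c s).det = 1 := by
  rw [g1_eq, Matrix.det_fin_three]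
  simp [Matrix.vecHead, Matrix.vecTail]
  calc c * (starRingEnd ℂ) c + s * (starRingEnd ℂ) s = 1 := key h

lemma zeroing (x y : ℂ) : ∃ (c s : ℂ) (t : ℝ), ‖c‖ ^ 2 + ‖s‖ ^ 2 = 1 ∧ 0 ≤ t ∧
    (starRingEnd ℂ) c * x - s * y = 0 ∧
    (starRingEnd ℂ) s * x + c * y = (t : ℂ) ∧ t ^ 2 = ‖x‖ ^ 2 + ‖y‖ ^ 2 := by
  by_cases h : x = 0 ∧ y = 0
  · exact ⟨1, 0, 0, by norm_num, le_refl _, by simp [h.1], by simp [h.1, h.2], by simp [h.1, h.2]⟩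
  · set q : ℝ := ‖x‖ ^ 2 + ‖y‖ ^ 2 with hq
    have hqpos : 0 < q := by
      rcases (not_and_or.mp h) with h' | h'
      · have : 0 < ‖x‖ := norm_pos_iff.mpr h'
        positivity
      · have : 0 < ‖y‖ := norm_pos_iff.mpr h'
        positivity
    set r : ℝ := Real.sqrt q with hr
    have hrpos : 0 < r := Real.sqrt_pos.mpr hqpos
    have hr2 : r ^ 2 = q := Real.sq_sqrt hqpos.le
    have hrne : (r : ℂ) ≠ 0 := by exact_mod_cast hrpos.ne'
    refine ⟨(starRingEnd ℂ) y / r, x / r, r, ?_, hrpos.le, ?_, ?_, hr2⟩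
    · rw [norm_div, norm_div]
      simp only [RingHomIsometric.norm_map, Complex.norm_real, Real.norm_eq_abs,
        abs_of_pos hrpos]
      field_simp
      rw [hr2, hq]; ring
    · simp only [map_div₀, Complex.conj_conj, Complex.conj_ofReal]
      field_simp
      ring
    · simp only [map_div₀, Complex.conj_ofReal]
      rw [div_mul_eq_mul_div, div_mul_eq_mul_div, ← add_div, Complex.conj_mul', Complex.conj_mul']
      rw [div_eq_iff hrne]
      have h5 : ‖x‖ ^ 2 + ‖y‖ ^ 2 = r ^ 2 := by rw [hr2, hq]
      have h6 : ((‖x‖ ^ 2 + ‖y‖ ^ 2 : ℝ) : ℂ) = ((r ^ 2 : ℝ) : ℂ) := by exact_mod_cast congrArg (Complex.ofReal) h5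
      push_cast at h6
      rw [h6]; ring

lemma unitary_mul {n : ℕ} (X Y : Matrix (Fin n) (Fin n) ℂ)
    (hX : X * Xᴴ = 1) (hY : Y * Yᴴ = 1) : (X * Y) * (X * Y)ᴴ = 1 := by
  rw [Matrix.conjTranspose_mul, Matrix.mul_assoc, ← Matrix.mul_assoc Y, hY,
    Matrix.one_mul, hX]

lemma su3 (M : Matrix (Fin 3) (Fin 3) ℂ) (hu : Mᴴ * M = 1) (hu' : M * Mᴴ = 1)
    (hd : M.det = 1) :
    ∃ d1 e1 d2 e2 d1' e1' : ℂ,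
      ‖d1‖ ^ 2 + ‖e1‖ ^ 2 = 1 ∧ ‖d2‖ ^ 2 + ‖e2‖ ^ 2 = 1 ∧ ‖d1'‖ ^ 2 + ‖e1'‖ ^ 2 = 1 ∧
      M = givens 3 0 (of_decide_eq_true rfl) d1 e1 * givens 3 1 (of_decide_eq_true rfl) d2 e2 *
          givens 3 0 (of_decide_eq_true rfl) d1' e1' := by
  obtain ⟨c, s, t, hcs, ht0, hz1, hz2, ht2⟩ := zeroing (M 0 2) (M 1 2)
  have hcol : (starRingEnd ℂ) (M 0 2) * M 0 2 + (starRingEnd ℂ) (M 1 2) * M 1 2 +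
      (starRingEnd ℂ) (M 2 2) * M 2 2 = 1 := by
    have h := congrFun (congrFun hu 2) 2
    simpa [Matrix.mul_apply, Fin.sum_univ_three, Matrix.conjTranspose_apply,
      Matrix.one_apply] using h
  have hcolR : ‖M 0 2‖ ^ 2 + ‖M 1 2‖ ^ 2 + ‖M 2 2‖ ^ 2 = 1 := by
    rw [Complex.conj_mul', Complex.conj_mul', Complex.conj_mul'] at hcol
    exact_mod_cast hcol
  have hreal : t ^ 2 + ‖M 2 2‖ ^ 2 = 1 := by rw [ht2]; linarith
  have hAnorm : ‖M 2 2‖ ^ 2 + ‖(-(t : ℂ))‖ ^ 2 = 1 := by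
    rw [norm_neg, Complex.norm_real, Real.norm_eq_abs, _root_.abs_of_nonneg ht0]
    linarith
  have hBnorm : ‖(starRingEnd ℂ) c‖ ^ 2 + ‖(-s)‖ ^ 2 = 1 := by
    rw [norm_neg, RCLike.norm_conj]; exact hcs
  set A : Matrix (Fin 3) (Fin 3) ℂ := givens 3 1 (of_decide_eq_true rfl) (M 2 2) (-(t : ℂ)) with hA
  set B : Matrix (Fin 3) (Fin 3) ℂ := givens 3 0 (of_decide_eq_true rfl) ((starRingEnd ℂ) c) (-s) with hB
  set U : Matrix (Fin 3) (Fin 3) ℂ := A * (B * M) with hU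
  have hzz : (starRingEnd ℂ) (M 2 2) * M 2 2 = ((‖M 2 2‖ : ℝ) : ℂ) ^ 2 := Complex.conj_mul' _
  have htz : ((t : ℂ)) ^ 2 + ((‖M 2 2‖ : ℝ) : ℂ) ^ 2 = 1 := by exact_mod_cast hreal
  have hU02 : U 0 2 = 0 := by
    rw [hU, hA, hB, g0_eq, g1_eq]
    simp [Matrix.mul_apply, Fin.sum_univ_three, Matrix.vecMul, dotProduct, Matrix.vecHead, Matrix.vecTail]
    linear_combination hz1
  have hU12 : U 1 2 = 0 := by
    rw [hU, hA, hB, g0_eq, g1_eq]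
    simp [Matrix.mul_apply, Fin.sum_univ_three, Matrix.vecMul, dotProduct, Matrix.vecHead, Matrix.vecTail]
    linear_combination (M 2 2) * hz2
  have hU22 : U 2 2 = 1 := by
    rw [hU, hA, hB, g0_eq, g1_eq]
    simp [Matrix.mul_apply, Fin.sum_univ_three, Matrix.vecMul, dotProduct, Matrix.vecHead, Matrix.vecTail]
    linear_combination (t : ℂ) * hz2 + hzz + htz
  have hUU : U * Uᴴ = 1 := unitary_mul A (B * M) (g1_unit hAnorm)
    (unitary_mul B M (g0_unit hBnorm) hu')
  have hUU' : Uᴴ * U = 1 := mul_eq_one_comm.mp hUU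
  have hdU : U.det = 1 := by
    rw [hU, Matrix.det_mul, Matrix.det_mul, hA, hB, g1_det hAnorm, g0_det hBnorm, hd]
    ring
  have h22 : U 2 0 * (starRingEnd ℂ) (U 2 0) + U 2 1 * (starRingEnd ℂ) (U 2 1) = 0 := by
    have h := congrFun (congrFun hUU 2) 2
    simp [Matrix.mul_apply, Fin.sum_univ_three, Matrix.conjTranspose_apply,
      Matrix.one_apply, hU02, hU12, hU22] at h
    linear_combination h
  have h22R : ‖U 2 0‖ ^ 2 + ‖U 2 1‖ ^ 2 = 0 := by
    rw [Complex.mul_conj', Complex.mul_conj'] at h22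
    exact_mod_cast h22
  have hU20 : U 2 0 = 0 := by
    have h20 : ‖U 2 0‖ ^ 2 = 0 := by nlinarith [sq_nonneg ‖U 2 0‖, sq_nonneg ‖U 2 1‖]
    have := pow_eq_zero_iff (n := 2) (by norm_num) |>.mp h20
    simpa using this
  have hU21 : U 2 1 = 0 := by
    have h21 : ‖U 2 1‖ ^ 2 = 0 := by nlinarith [sq_nonneg ‖U 2 0‖, sq_nonneg ‖U 2 1‖]
    have := pow_eq_zero_iff (n := 2) (by norm_num) |>.mp h21
    simpa using this
  have hdet2 : U 0 0 * U 1 1 - U 0 1 * U 1 0 = 1 := by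
    have h := hdU
    rw [Matrix.det_fin_three, hU02, hU12, hU22, hU20, hU21] at h
    linear_combination h
  have hcol0 : (starRingEnd ℂ) (U 0 0) * U 0 0 + (starRingEnd ℂ) (U 1 0) * U 1 0 = 1 := by
    have h := congrFun (congrFun hUU' 0) 0
    simp [Matrix.mul_apply, Fin.sum_univ_three, Matrix.conjTranspose_apply,
      Matrix.one_apply, hU02, hU12, hU22, hU20, hU21] at h
    linear_combination h
  have hcol1 : (starRingEnd ℂ) (U 0 1) * U 0 1 + (starRingEnd ℂ) (U 1 1) * U 1 1 = 1 := by
    have h := congrFun (congrFun hUU' 1) 1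
    simp [Matrix.mul_apply, Fin.sum_univ_three, Matrix.conjTranspose_apply,
      Matrix.one_apply, hU02, hU12, hU22, hU20, hU21] at h
    simpa using h
  have horth : (starRingEnd ℂ) (U 0 0) * U 0 1 + (starRingEnd ℂ) (U 1 0) * U 1 1 = 0 := by
    have h := congrFun (congrFun hUU' 0) 1
    simp [Matrix.mul_apply, Fin.sum_univ_three, Matrix.conjTranspose_apply,
      Matrix.one_apply, hU02, hU12, hU22, hU20, hU21] at h
    simpa using h
  have horth' : U 0 0 * (starRingEnd ℂ) (U 0 1) + U 1 0 * (starRingEnd ℂ) (U 1 1) = 0 := by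
    have h := congrArg (starRingEnd ℂ) horth
    simpa using h
  have hd11 : U 1 1 = (starRingEnd ℂ) (U 0 0) := by
    linear_combination (-(U 1 1)) * hcol0 + (starRingEnd ℂ) (U 0 0) * hdet2 + U 1 0 * horth
  have hd10 : U 1 0 = -(starRingEnd ℂ) (U 0 1) := by
    linear_combination (-(U 1 0)) * hcol1 - (starRingEnd ℂ) (U 0 1) * hdet2 + U 1 1 * horth'
  have hrow0 : U 0 0 * (starRingEnd ℂ) (U 0 0) + U 0 1 * (starRingEnd ℂ) (U 0 1) = 1 := by
    have h := congrFun (congrFun hUU 0) 0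
    simp [Matrix.mul_apply, Fin.sum_univ_three, Matrix.conjTranspose_apply,
      Matrix.one_apply, hU02, hU12, hU22, hU20, hU21] at h
    simpa using h
  have hnormU : ‖U 0 0‖ ^ 2 + ‖U 0 1‖ ^ 2 = 1 := by
    rw [Complex.mul_conj', Complex.mul_conj'] at hrow0
    exact_mod_cast hrow0
  have hUg : U = givens 3 0 (of_decide_eq_true rfl) (U 0 0) (U 0 1) := by
    rw [g0_eq]
    ext i j
    fin_cases i <;> fin_cases j <;>
      simp [Matrix.vecHead, Matrix.vecTail, hU02, hU12, hU22, hU20, hU21, hd11, hd10]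
  refine ⟨c, s, (starRingEnd ℂ) (M 2 2), (t : ℂ), U 0 0, U 0 1, hcs, ?_, hnormU, ?_⟩
  · rw [RCLike.norm_conj, Complex.norm_real, Real.norm_eq_abs, _root_.abs_of_nonneg ht0]
    linarith
  · have hAct : Aᴴ = givens 3 1 (of_decide_eq_true rfl) ((starRingEnd ℂ) (M 2 2)) ((t : ℂ)) := by
      rw [hA, g1_ct, neg_neg]
    have hBct : Bᴴ = givens 3 0 (of_decide_eq_true rfl) c s := by
      rw [hB, g0_ct, Complex.conj_conj, neg_neg]
    have hA1 : Aᴴ * A = 1 := mul_eq_one_comm.mp (g1_unit hAnorm)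
    have hB1 : Bᴴ * B = 1 := mul_eq_one_comm.mp (g0_unit hBnorm)
    have hMeq : M = Bᴴ * (Aᴴ * U) := by
      rw [hU, ← Matrix.mul_assoc Aᴴ A (B * M), hA1, Matrix.one_mul,
        ← Matrix.mul_assoc Bᴴ B M, hB1, Matrix.one_mul]
    rw [Matrix.mul_assoc]
    conv_lhs => rw [hMeq, hBct, hAct, hUg]

/-- Shift-through lemma: every product G₂G₁G₂' of Givens rotations on ℂ³ acting on
    rows {2,3}, {1,2}, {2,3} (1-based) can be rewritten as a product H₁H₂H₁' of Givens
    rotations acting on rows {1,2}, {2,3}, {1,2}. -/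
theorem shift_through (c2 s2 c1 s1 c2' s2' : ℂ)
    (h2 : ‖c2‖ ^ 2 + ‖s2‖ ^ 2 = 1) (h1 : ‖c1‖ ^ 2 + ‖s1‖ ^ 2 = 1)
    (h2' : ‖c2'‖ ^ 2 + ‖s2'‖ ^ 2 = 1) :
    ∃ d1 e1 d2 e2 d1' e1' : ℂ,
      ‖d1‖ ^ 2 + ‖e1‖ ^ 2 = 1 ∧ ‖d2‖ ^ 2 + ‖e2‖ ^ 2 = 1 ∧ ‖d1'‖ ^ 2 + ‖e1'‖ ^ 2 = 1 ∧
      givens 3 1 (by omega) c2 s2 * givens 3 0 (by omega) c1 s1 *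
          givens 3 1 (by omega) c2' s2' =
        givens 3 0 (by omega) d1 e1 * givens 3 1 (by omega) d2 e2 *
          givens 3 0 (by omega) d1' e1' := by
  have hu' : (givens 3 1 (by omega) c2 s2 * givens 3 0 (by omega) c1 s1 *
      givens 3 1 (by omega) c2' s2') *
      (givens 3 1 (by omega) c2 s2 * givens 3 0 (by omega) c1 s1 *
      givens 3 1 (by omega) c2' s2')ᴴ = 1 :=
    unitary_mul _ _ (unitary_mul _ _ (g1_unit h2) (g0_unit h1)) (g1_unit h2')
  have hu := mul_eq_one_comm.mp hu'
  have hd : (givens 3 1 (by omega) c2 s2 * givens 3 0 (by omega) c1 s1 *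
      givens 3 1 (by omega) c2' s2').det = 1 := by
    rw [Matrix.det_mul, Matrix.det_mul, g1_det h2, g0_det h1, g1_det h2']
    ring
  exact su3 _ hu hu' hd
end
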